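/- arXiv:2307.15975 — 5 statements merged into one kernel-verified Lean document; each statement's English description precedes it below -/
import Mathlib

section
/- Let N ≥ 2 and let 0 < γ_1 ≤ γ_2 ≤ ... ≤ γ_N be worker types. Suppose a contract (f_n, R_n)_{n=1}^N satisfies: (i) R_1 − f_1/γ_1 ≥ 0; (ii) 0 ≤ f_1 ≤ f_2 ≤ ... ≤ f_N; (iii) the local downward incentive constraints R_n − f_n/γ_n ≥ R_{n−1} − f_{n−1}/γ_n for all n ∈ {2,...,N}; and (iv) the local upward incentive constraints R_n − f_n/γ_n ≥ R_{n+1} − f_{n+1}/γ_n for all n ∈ {1,...,N−1}. Then the contract satisfies all individual rationality constraints R_n − f_n/γ_n ≥ 0 for every n, and all incentive compatibility constraints R_n − f_n/γ_n ≥ R_i − f_i/γ_n for all n, i ∈ {1,...,N}. -/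
/-!
The utility gap `(R i - f i / γ) - (R j - f j / γ)` between a higher-frequency item `i` and a
lower-frequency item `j` increases with the type `γ` (single crossing). Hence the local downward
constraint of type `k` propagates to every higher type `n ≥ k`, so type `n`'s utility increases
along the items `1, …, n`; symmetrically, the local upward constraints make it decrease along
`n, …, N`. Individual rationality then follows from that of type `1`, since `f 1 / γ` decreases
in `γ`.
-/

open Set

lemma div_sub_div_le_div_sub_div {a b γ γ' : ℝ} (hab : a ≤ b) (hγ : 0 < γ) (hγγ' : γ ≤ γ') :
    b / γ' - a / γ' ≤ b / γ - a / γ := by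
  rw [← sub_div, ← sub_div]
  exact div_le_div_of_nonneg_left (sub_nonneg.2 hab) hγ hγγ'

lemma monotoneOn_Icc_of_le_succ {α : Type*} [Preorder α] {u : ℕ → α} {a b : ℕ}
    (h : ∀ k, a ≤ k → k < b → u k ≤ u (k + 1)) : MonotoneOn u (Icc a b) :=
  monotoneOn_of_le_succ ordConnected_Icc fun k _ hk hk' =>
    h k hk.1 (Order.succ_le_iff.1 hk'.2)

lemma antitoneOn_Icc_of_succ_le {α : Type*} [Preorder α] {u : ℕ → α} {a b : ℕ}
    (h : ∀ k, a ≤ k → k < b → u (k + 1) ≤ u k) : AntitoneOn u (Icc a b) :=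
  monotoneOn_Icc_of_le_succ (α := αᵒᵈ) h

section Contract

variable {N : ℕ} {γ f R : ℕ → ℝ}

lemma utility_monotoneOn_of_local_downward_IC (hγpos : ∀ k ∈ Icc 1 N, 0 < γ k)
    (hγmono : MonotoneOn γ (Icc 1 N)) (hfmono : MonotoneOn f (Icc 1 N))
    (hLDIC : ∀ n, 2 ≤ n → n ≤ N → R n - f n / γ n ≥ R (n - 1) - f (n - 1) / γ n)
    {n : ℕ} (hnN : n ≤ N) : MonotoneOn (fun i => R i - f i / γ n) (Icc 1 n) := by
  refine monotoneOn_Icc_of_le_succ fun k hk hkn => ?_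
  have hk' : k ∈ Icc 1 N := ⟨hk, by omega⟩
  have hk1 : k + 1 ∈ Icc 1 N := ⟨by omega, by omega⟩
  have hdown := hLDIC (k + 1) (by omega) hk1.2
  rw [Nat.add_sub_cancel] at hdown
  have hcross := div_sub_div_le_div_sub_div (hfmono hk' hk1 k.le_succ) (hγpos _ hk1)
    (hγmono hk1 ⟨by omega, hnN⟩ hkn)
  linarith

lemma utility_antitoneOn_of_local_upward_IC (hγpos : ∀ k ∈ Icc 1 N, 0 < γ k)
    (hγmono : MonotoneOn γ (Icc 1 N)) (hfmono : MonotoneOn f (Icc 1 N))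
    (hLUIC : ∀ n, 1 ≤ n → n + 1 ≤ N → R n - f n / γ n ≥ R (n + 1) - f (n + 1) / γ n)
    {n : ℕ} (hn : 1 ≤ n) : AntitoneOn (fun i => R i - f i / γ n) (Icc n N) := by
  refine antitoneOn_Icc_of_succ_le fun k hnk hkN => ?_
  have hk : k ∈ Icc 1 N := ⟨by omega, by omega⟩
  have hk1 : k + 1 ∈ Icc 1 N := ⟨by omega, by omega⟩
  have hup := hLUIC k hk.1 hkN
  have hcross := div_sub_div_le_div_sub_div (hfmono hk hk1 k.le_succ) (hγpos _ ⟨hn, by omega⟩)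
    (hγmono ⟨hn, by omega⟩ hk hnk)
  linarith

end Contract

theorem local_constraints_imply_IR_IC_general
    (N : ℕ) (γ f R : ℕ → ℝ)
    (hγpos : 0 < γ 1)
    (hγmono : ∀ n, 1 ≤ n → n < N → γ n ≤ γ (n + 1))
    (hIR1 : R 1 - f 1 / γ 1 ≥ 0)
    (hf0 : 0 ≤ f 1)
    (hfmono : ∀ n, 1 ≤ n → n < N → f n ≤ f (n + 1))
    (hLDIC : ∀ n, 2 ≤ n → n ≤ N →
      R n - f n / γ n ≥ R (n - 1) - f (n - 1) / γ n)
    (hLUIC : ∀ n, 1 ≤ n → n + 1 ≤ N →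
      R n - f n / γ n ≥ R (n + 1) - f (n + 1) / γ n) :
    (∀ n, 1 ≤ n → n ≤ N → R n - f n / γ n ≥ 0) ∧
    (∀ n i, 1 ≤ n → n ≤ N → 1 ≤ i → i ≤ N →
      R n - f n / γ n ≥ R i - f i / γ n) := by
  have hγmono' : MonotoneOn γ (Icc 1 N) := monotoneOn_Icc_of_le_succ hγmono
  have hfmono' : MonotoneOn f (Icc 1 N) := monotoneOn_Icc_of_le_succ hfmono
  have hγ_one_le : ∀ k ∈ Icc 1 N, γ 1 ≤ γ k := fun k hk =>
    hγmono' ⟨le_rfl, hk.1.trans hk.2⟩ hk hk.1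
  have hγpos' : ∀ k ∈ Icc 1 N, 0 < γ k := fun k hk => hγpos.trans_le (hγ_one_le k hk)
  have hIC : ∀ n i, 1 ≤ n → n ≤ N → 1 ≤ i → i ≤ N → R n - f n / γ n ≥ R i - f i / γ n := by
    intro n i hn hnN hi hiN
    rcases le_total i n with hin | hni
    · exact utility_monotoneOn_of_local_downward_IC hγpos' hγmono' hfmono' hLDIC hnN
        ⟨hi, hin⟩ ⟨hn, le_rfl⟩ hin
    · exact utility_antitoneOn_of_local_upward_IC hγpos' hγmono' hfmono' hLUIC hn
        ⟨le_rfl, hnN⟩ ⟨hni, hiN⟩ hni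
  refine ⟨fun n hn hnN => ?_, hIC⟩
  calc R n - f n / γ n ≥ R 1 - f 1 / γ n := hIC n 1 hn hnN le_rfl (hn.trans hnN)
    _ ≥ R 1 - f 1 / γ 1 := by gcongr; exact hγ_one_le n ⟨hn, hnN⟩
    _ ≥ 0 := hIR1

/-- For nondecreasing positive types, if a contract satisfies
the lowest-type IR constraint, monotone nonnegative frequencies, the local
downward IC constraints and the local upward IC constraints, then it
satisfies all IR constraints and all IC constraints.
Indices run over 1,...,N. -/
theorem local_constraints_imply_IR_IC
    (N : ℕ) (hN : 2 ≤ N) (γ f R : ℕ → ℝ)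
    (hγpos : 0 < γ 1)
    (hγmono : ∀ n, 1 ≤ n → n < N → γ n ≤ γ (n + 1))
    (hIR1 : R 1 - f 1 / γ 1 ≥ 0)
    (hf0 : 0 ≤ f 1)
    (hfmono : ∀ n, 1 ≤ n → n < N → f n ≤ f (n + 1))
    (hLDIC : ∀ n, 2 ≤ n → n ≤ N →
      R n - f n / γ n ≥ R (n - 1) - f (n - 1) / γ n)
    (hLUIC : ∀ n, 1 ≤ n → n + 1 ≤ N →
      R n - f n / γ n ≥ R (n + 1) - f (n + 1) / γ n) :
    (∀ n, 1 ≤ n → n ≤ N → R n - f n / γ n ≥ 0) ∧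
    (∀ n i, 1 ≤ n → n ≤ N → 1 ≤ i → i ≤ N →
      R n - f n / γ n ≥ R i - f i / γ n) :=
  local_constraints_imply_IR_IC_general N γ f R hγpos hγmono hIR1 hf0 hfmono hLDIC hLUIC
end

section
/- Let N ≥ 1, let 0 < γ_1 ≤ γ_2 ≤ ... ≤ γ_N, and let 0 ≤ f_1 ≤ f_2 ≤ ... ≤ f_N. Define rewards by R_1 = f_1/γ_1 and R_n = f_n/γ_n + Σ_{i=1}^{n−1} ( f_i/γ_i − f_i/γ_{i+1} ) for n ≥ 2. Then the contract (f_n, R_n)_{n=1}^N satisfies every individual rationality constraint R_n − f_n/γ_n ≥ 0 and every incentive compatibility constraint R_n − f_n/γ_n ≥ R_i − f_i/γ_n for all n, i ∈ {1,...,N}. -/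
/-!
Writing `c n = 1 / γ n`, the closed-form rewards leave a type-`n` worker the information rent
`U n = ∑_{1 ≤ j < n} f j (c j - c (j + 1))`. Since `c` is antitone, every summand is nonnegative,
which gives IR. For IC, `U n - U i` and `f i (c i - c n)` telescope over the same steps
between `i` and `n`, with weights `f j` versus `f i`; monotonicity of `f` compares them termwise.
-/

open Finset

/-- The utility `R n - f n / γ n` of a type-`n` worker, with `c = γ⁻¹`. -/
def informationRent (f c : ℕ → ℝ) (n : ℕ) : ℝ :=
  ∑ j ∈ Ico 1 n, f j * (c j - c (j + 1))

section Telescoping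

variable {a b : ℕ} {c g : ℕ → ℝ} {x : ℝ}

theorem mul_sub_eq_sum_Ico_mul_sub_succ (hab : a ≤ b) :
    x * (c a - c b) = ∑ j ∈ Ico a b, x * (c j - c (j + 1)) := by
  rw [← mul_sum, ← neg_sub (c b), ← sum_Ico_sub c hab, ← sum_neg_distrib]
  simp only [neg_sub]

theorem mul_sub_le_sum_Ico_mul_sub_succ (hab : a ≤ b)
    (hc : ∀ j ∈ Ico a b, c (j + 1) ≤ c j) (hg : ∀ j ∈ Ico a b, x ≤ g j) :
    x * (c a - c b) ≤ ∑ j ∈ Ico a b, g j * (c j - c (j + 1)) := by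
  rw [mul_sub_eq_sum_Ico_mul_sub_succ hab]
  exact sum_le_sum fun j hj => mul_le_mul_of_nonneg_right (hg j hj) (sub_nonneg.2 (hc j hj))

theorem sum_Ico_mul_sub_succ_le_mul_sub (hab : a ≤ b)
    (hc : ∀ j ∈ Ico a b, c (j + 1) ≤ c j) (hg : ∀ j ∈ Ico a b, g j ≤ x) :
    ∑ j ∈ Ico a b, g j * (c j - c (j + 1)) ≤ x * (c a - c b) := by
  rw [mul_sub_eq_sum_Ico_mul_sub_succ hab]
  exact sum_le_sum fun j hj => mul_le_mul_of_nonneg_right (hg j hj) (sub_nonneg.2 (hc j hj))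

end Telescoping

section InformationRent

variable {N : ℕ} {f c : ℕ → ℝ}

theorem informationRent_sub_informationRent {i n : ℕ} (hi : 1 ≤ i) (hin : i ≤ n) :
    informationRent f c n - informationRent f c i = ∑ j ∈ Ico i n, f j * (c j - c (j + 1)) := by
  rw [informationRent, informationRent, ← sum_Ico_consecutive _ hi hin, add_sub_cancel_left]

theorem antitoneOn_apply_succ_le {a b : ℕ} (hc : AntitoneOn c (Set.Icc 1 N)) (ha : 1 ≤ a)
    (hb : b ≤ N) : ∀ j ∈ Ico a b, c (j + 1) ≤ c j := fun j hj => by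
  rw [mem_Ico] at hj
  exact hc ⟨by omega, by omega⟩ ⟨by omega, by omega⟩ (Nat.le_succ j)

theorem informationRent_nonneg (hc : AntitoneOn c (Set.Icc 1 N))
    (hf : MonotoneOn f (Set.Icc 1 N)) (hf1 : 0 ≤ f 1) {n : ℕ} (hn : n ∈ Set.Icc 1 N) :
    0 ≤ informationRent f c n := by
  obtain ⟨hn1, hnN⟩ := hn
  have h := mul_sub_le_sum_Ico_mul_sub_succ (g := f) hn1 (antitoneOn_apply_succ_le hc le_rfl hnN)
    fun j hj => hf1.trans <| by
      rw [mem_Ico] at hj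
      exact hf ⟨le_rfl, by omega⟩ ⟨hj.1, by omega⟩ hj.1
  rwa [zero_mul] at h

theorem mul_sub_le_informationRent_sub (hc : AntitoneOn c (Set.Icc 1 N))
    (hf : MonotoneOn f (Set.Icc 1 N)) {i n : ℕ} (hi : i ∈ Set.Icc 1 N) (hn : n ∈ Set.Icc 1 N) :
    f i * (c i - c n) ≤ informationRent f c n - informationRent f c i := by
  obtain ⟨hi1, hiN⟩ := hi
  obtain ⟨hn1, hnN⟩ := hn
  rcases le_total i n with hin | hni
  · rw [informationRent_sub_informationRent hi1 hin]
    refine mul_sub_le_sum_Ico_mul_sub_succ hin (antitoneOn_apply_succ_le hc hi1 hnN)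
      fun j hj => ?_
    rw [mem_Ico] at hj
    exact hf ⟨hi1, hiN⟩ ⟨by omega, by omega⟩ hj.1
  · rw [← neg_sub (informationRent f c i), informationRent_sub_informationRent hn1 hni,
      ← neg_sub (c n), mul_neg, neg_le_neg_iff]
    refine sum_Ico_mul_sub_succ_le_mul_sub hni (antitoneOn_apply_succ_le hc hn1 hiN)
      fun j hj => ?_
    rw [mem_Ico] at hj
    exact hf ⟨by omega, by omega⟩ ⟨hi1, hiN⟩ hj.2.le

end InformationRent

theorem utility_eq_informationRent {N : ℕ} {γ f R : ℕ → ℝ} (hR1 : R 1 = f 1 / γ 1)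
    (hRn : ∀ n, 2 ≤ n → n ≤ N →
      R n = f n / γ n + ∑ i ∈ Finset.Icc 1 (n - 1), (f i / γ i - f i / γ (i + 1)))
    {n : ℕ} (hn : n ∈ Set.Icc 1 N) :
    R n - f n / γ n = informationRent f (fun j => (γ j)⁻¹) n := by
  obtain ⟨hn1, hnN⟩ := hn
  obtain rfl | ⟨m, rfl⟩ : n = 1 ∨ ∃ m, n = m + 2 := by
    rcases Nat.exists_eq_add_of_le hn1 with ⟨k, rfl⟩
    rcases k with _ | m
    · exact Or.inl rfl
    · exact Or.inr ⟨m, by omega⟩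
  · simp [informationRent, hR1]
  · rw [hRn _ le_add_self hnN, informationRent, show m + 2 - 1 = m + 1 by omega,
      ← Ico_add_one_right_eq_Icc, add_sub_cancel_left]
    simp only [div_eq_mul_inv, mul_sub]
    rfl

theorem reward_formula_implies_IR_IC_general
    (N : ℕ) (γ f R : ℕ → ℝ)
    (hγpos : ∀ n, 1 ≤ n → n ≤ N → 0 < γ n)
    (hγmono : ∀ n, 1 ≤ n → n < N → γ n ≤ γ (n + 1))
    (hf0 : 0 ≤ f 1)
    (hfmono : ∀ n, 1 ≤ n → n < N → f n ≤ f (n + 1))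
    (hR1 : R 1 = f 1 / γ 1)
    (hRn : ∀ n, 2 ≤ n → n ≤ N →
      R n = f n / γ n + ∑ i ∈ Finset.Icc 1 (n - 1), (f i / γ i - f i / γ (i + 1))) :
    (∀ n, 1 ≤ n → n ≤ N → R n - f n / γ n ≥ 0) ∧
    (∀ n i, 1 ≤ n → n ≤ N → 1 ≤ i → i ≤ N →
      R n - f n / γ n ≥ R i - f i / γ n) := by
  have hc : AntitoneOn (fun j => (γ j)⁻¹) (Set.Icc 1 N) :=
    antitoneOn_of_add_one_le Set.ordConnected_Icc fun j _ hj hj' =>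
      inv_anti₀ (hγpos j hj.1 hj.2) (hγmono j hj.1 (by have := hj'.2; omega))
  have hf : MonotoneOn f (Set.Icc 1 N) :=
    monotoneOn_of_le_add_one Set.ordConnected_Icc fun j _ hj hj' =>
      hfmono j hj.1 (by have := hj'.2; omega)
  refine ⟨fun n hn1 hnN => ?_, fun n i hn1 hnN hi1 hiN => ?_⟩
  · rw [utility_eq_informationRent hR1 hRn ⟨hn1, hnN⟩]
    exact informationRent_nonneg hc hf hf0 ⟨hn1, hnN⟩
  · have hIC := mul_sub_le_informationRent_sub hc hf ⟨hi1, hiN⟩ ⟨hn1, hnN⟩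
    have hUn := utility_eq_informationRent hR1 hRn ⟨hn1, hnN⟩
    have hUi := utility_eq_informationRent hR1 hRn ⟨hi1, hiN⟩
    have hshift : f i / γ i - f i / γ n = f i * ((γ i)⁻¹ - (γ n)⁻¹) := by ring
    linarith

/-- With nondecreasing positive types, nondecreasing nonnegative
frequencies, and rewards given by the closed form, the contract satisfies all
IR and all IC constraints. Indices run over 1,...,N. -/
theorem reward_formula_implies_IR_IC
    (N : ℕ) (hN : 1 ≤ N) (γ f R : ℕ → ℝ)
    (hγpos : ∀ n, 1 ≤ n → n ≤ N → 0 < γ n)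
    (hγmono : ∀ n, 1 ≤ n → n < N → γ n ≤ γ (n + 1))
    (hf0 : 0 ≤ f 1)
    (hfmono : ∀ n, 1 ≤ n → n < N → f n ≤ f (n + 1))
    (hR1 : R 1 = f 1 / γ 1)
    (hRn : ∀ n, 2 ≤ n → n ≤ N →
      R n = f n / γ n + ∑ i ∈ Finset.Icc 1 (n - 1), (f i / γ i - f i / γ (i + 1))) :
    (∀ n, 1 ≤ n → n ≤ N → R n - f n / γ n ≥ 0) ∧
    (∀ n i, 1 ≤ n → n ≤ N → 1 ≤ i → i ≤ N →
      R n - f n / γ n ≥ R i - f i / γ n) :=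
  reward_formula_implies_IR_IC_general N γ f R hγpos hγmono hf0 hfmono hR1 hRn
end

section
/- Let N ≥ 2 and let 0 < γ_1 < γ_2 < ... < γ_N satisfy the discrete convexity condition 1/γ_{n−1} + 1/γ_{n+1} − 2/γ_n ≥ 0 for all n with 1 < n < N. Define b_n = 1/γ_n + (1/γ_n − 1/γ_{n+1})(N − n) for n < N and b_N = 1/γ_N. Then the sequence (b_n) is strictly decreasing: b_1 > b_2 > ... > b_N. -/
/-- For strictly increasing positive types satisfying the
discrete convexity condition 1/γ_{n−1} + 1/γ_{n+1} − 2/γ_n ≥ 0, the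
effective marginal cost coefficients b_n are strictly decreasing.
Indices run over 1,...,N. -/
theorem cost_coefficients_strictly_decreasing
    (N : ℕ) (hN : 2 ≤ N) (γ b : ℕ → ℝ)
    (hγpos : 0 < γ 1)
    (hγmono : ∀ n, 1 ≤ n → n < N → γ n < γ (n + 1))
    (hconvex : ∀ n, 1 < n → n < N →
      1 / γ (n - 1) + 1 / γ (n + 1) - 2 / γ n ≥ 0)
    (hb : ∀ n, 1 ≤ n → n < N →
      b n = 1 / γ n + (1 / γ n - 1 / γ (n + 1)) * ((N : ℝ) - (n : ℝ)))
    (hbN : b N = 1 / γ N) :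
    ∀ n, 1 ≤ n → n < N → b (n + 1) < b n := by
  have hpos : ∀ k, 1 ≤ k → k ≤ N → 0 < γ k := by
    intro k hk1 hkN
    induction k with
    | zero => omega
    | succ m ih =>
      rcases Nat.eq_or_lt_of_le hk1 with h | h
      · simpa [← h] using hγpos
      · have hm1 : 1 ≤ m := by omega
        have hmN : m < N := by omega
        exact (ih hm1 (by omega)).trans (hγmono m hm1 hmN)
  intro n hn1 hnN
  have hγn : 0 < γ n := hpos n hn1 (by omega)
  have hγn1 : 0 < γ (n + 1) := hpos (n + 1) (by omega) (by omega)
  have hd : 1 / γ (n + 1) < 1 / γ n :=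
    one_div_lt_one_div_of_lt hγn (hγmono n hn1 hnN)
  rcases eq_or_lt_of_le (Nat.succ_le_of_lt hnN) with h | h
  · -- n + 1 = N
    have hN' : n + 1 = N := h
    rw [hb n hn1 hnN, hN', hbN, ← hN']
    push_cast
    nlinarith [hd]
  · -- n + 1 < N
    have hn1N : n + 1 < N := h
    rw [hb n hn1 hnN, hb (n + 1) (by omega) hn1N]
    have hconv := hconvex (n + 1) (by omega) hn1N
    simp only [Nat.add_sub_cancel] at hconv
    have hconv' : 1 / γ n + 1 / γ (n + 1 + 1) - 2 * (1 / γ (n + 1)) ≥ 0 := by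
      rw [mul_one_div]; exact hconv
    have hNn : (1 : ℝ) ≤ (N : ℝ) - ((n : ℝ) + 1) := by
      have : (n : ℝ) + 2 ≤ (N : ℝ) := by exact_mod_cast h
      linarith
    push_cast
    nlinarith [hd, hNn, mul_nonneg hconv' (by linarith : (0:ℝ) ≤ (N:ℝ) - ((n:ℝ)+1))]
end

section
/- Let t > 0 and let a ≥ 1 be a real number. The average service latency of Case 2, D̄(θ) = (θ − at)³/(2tθ) + 3(θ − at)²/(2θ) + at²/θ, is strictly convex on the interval (at, ∞). -/
/-!
Expanding the cube and the square, `D̄(θ) = θ²/(2t) + qθ + r + c/θ` with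
`c = -(at)³/(2t) + 3(at)²/2 + at²`. The secant slope of `p x² + q x + r + c/x` over `[x, y]` is
`p (x + y) + q - c/(xy)`, and for `x < y < z` the slope over `[y, z]` exceeds it by
`(z - x) (p xyz + c)/(xyz)`. This is positive as soon as `p b³ + c ≥ 0` and `x, y, z > b ≥ 0`,
and for `D̄` with `b = at` the condition reads `3(at)²/2 + at² ≥ 0`.
-/

open Set

lemma slope_quadratic_add_div (p q r c : ℝ) {x y : ℝ} (hx : x ≠ 0) (hy : y ≠ 0) (hxy : x ≠ y) :
    ((p * y ^ 2 + q * y + r + c / y) - (p * x ^ 2 + q * x + r + c / x)) / (y - x) =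
      p * (x + y) + q - c / (x * y) := by
  have hyx : y - x ≠ 0 := sub_ne_zero.mpr hxy.symm
  field_simp
  ring

lemma cube_lt_mul_mul {b x y z : ℝ} (hb : 0 ≤ b) (hx : b < x) (hy : b < y) (hz : b < z) :
    b ^ 3 < x * y * z := by
  have hxy : b * b < x * y := mul_lt_mul'' hx hy hb hb
  calc b ^ 3 = b * b * b := by ring
    _ < x * y * z := mul_lt_mul'' hxy hz (by positivity) hb

theorem strictConvexOn_quadratic_add_div {p q r c b : ℝ} (hb : 0 ≤ b) (hp : 0 < p)
    (hc : -c ≤ p * b ^ 3) :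
    StrictConvexOn ℝ (Ioi b) (fun x => p * x ^ 2 + q * x + r + c / x) := by
  refine strictConvexOn_of_slope_strict_mono_adjacent (convex_Ioi b) ?_
  intro x y z hx hz hxy hyz
  have hx0 : 0 < x := hb.trans_lt hx
  have hy0 : 0 < y := hx0.trans hxy
  have hz0 : 0 < z := hy0.trans hyz
  rw [slope_quadratic_add_div p q r c hx0.ne' hy0.ne' hxy.ne,
    slope_quadratic_add_div p q r c hy0.ne' hz0.ne' hyz.ne]
  have hgap : p * (y + z) + q - c / (y * z) - (p * (x + y) + q - c / (x * y)) =
      (z - x) * (p * (x * y * z) + c) / (x * y * z) := by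
    field_simp
    ring
  have hpos : 0 < p * (x * y * z) + c := by
    linarith [mul_lt_mul_of_pos_left (cube_lt_mul_mul hb hx (hx.trans hxy) hz) hp]
  have hgap_pos : 0 < (z - x) * (p * (x * y * z) + c) / (x * y * z) :=
    div_pos (mul_pos (sub_pos.mpr (hxy.trans hyz)) hpos) (by positivity)
  linarith

/-- In Case 2, for t > 0 and a ≥ 1, the average service latency
D̄(θ) = (θ − at)³/(2tθ) + 3(θ − at)²/(2θ) + at²/θ is strictly convex on
(at, ∞). -/
theorem case2_latency_strictly_convex
    (t a : ℝ) (ht : 0 < t) (ha : 1 ≤ a) :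
    StrictConvexOn ℝ (Set.Ioi (a * t))
      (fun θ : ℝ =>
        (θ - a * t) ^ 3 / (2 * t * θ) + 3 * (θ - a * t) ^ 2 / (2 * θ) +
          a * t ^ 2 / θ) := by
  have ha0 : 0 ≤ a := zero_le_one.trans ha
  have hb : 0 ≤ a * t := mul_nonneg ha0 ht.le
  have hc : -(-(a * t) ^ 3 / (2 * t) + 3 * (a * t) ^ 2 / 2 + a * t ^ 2) ≤
      1 / (2 * t) * (a * t) ^ 3 := by
    calc _ = 1 / (2 * t) * (a * t) ^ 3 - (3 * (a * t) ^ 2 / 2 + a * t ^ 2) := by ring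
      _ ≤ _ := sub_le_self _ (by positivity)
  refine (strictConvexOn_quadratic_add_div (q := 3 / 2 - 3 * a / 2)
    (r := 3 * a ^ 2 * t / 2 - 3 * a * t) hb (by positivity) hc).congr fun θ hθ => ?_
  have hθ0 : θ ≠ 0 := (hb.trans_lt hθ).ne'
  field_simp
  ring
end

section
/- Let t > 0 and let a > 1 be a real number. The average Age of Information of Case 2, Ā(θ) = tθ/(θ − at) + (t²/(θ − at)) · (a² − a)/2, satisfies the identity Ā(θ) = t + (a² + a)t²/(2(θ − at)) for θ > at, and is strictly convex and strictly decreasing on the interval (at, ∞). -/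
/-!
Writing `θ t = t (θ - a t) + a t²` turns `Ā` into `t + c / (θ - a t)` with `c = (a² + a) t² / 2 > 0`,
a positive multiple of a translated `x ↦ x⁻¹` plus a constant; both properties on `(a t, ∞)` follow.
-/

open Set

theorem StrictConvexOn.const_mul {𝕜 E : Type*} [Field 𝕜] [LinearOrder 𝕜] [IsStrictOrderedRing 𝕜]
    [AddCommMonoid E] [Module 𝕜 E] {s : Set E} {f : E → 𝕜} {c : 𝕜} (hc : 0 < c)
    (hf : StrictConvexOn 𝕜 s f) : StrictConvexOn 𝕜 s fun x => c * f x := by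
  refine ⟨hf.1, fun x hx y hy hxy p q hp hq hpq => ?_⟩
  calc c * f (p • x + q • y) < c * (p * f x + q * f y) :=
        mul_lt_mul_of_pos_left (hf.2 hx hy hxy hp hq hpq) hc
    _ = p * (c * f x) + q * (c * f y) := by ring

section ShiftedReciprocal

variable (k b : ℝ) {c : ℝ}

theorem strictConvexOn_const_add_div_sub (hc : 0 < c) :
    StrictConvexOn ℝ (Ioi b) fun x => k + c / (x - b) := by
  have hinv := (((strictConvexOn_zpow (m := -1) (by norm_num) (by norm_num)).translate_left
    (-b)).const_mul hc).add_const k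
  have hs : (fun z => -b + z) ⁻¹' Ioi 0 = Ioi b := by ext; simp [neg_add_eq_sub]
  rw [hs] at hinv
  exact hinv.congr fun x _ => by simp [add_comm k, sub_eq_add_neg, div_eq_mul_inv]

theorem strictAntiOn_const_add_div_sub (hc : 0 < c) :
    StrictAntiOn (fun x => k + c / (x - b)) (Ioi b) := fun _ hx _ _ hxy =>
  (add_lt_add_iff_left k).2 (div_lt_div_of_pos_left hc (sub_pos.2 hx) (sub_lt_sub_right hxy b))

end ShiftedReciprocal

theorem case2_aoi_eq_add_div (t a θ : ℝ) (hθ : θ ≠ a * t) :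
    t * θ / (θ - a * t) + (t ^ 2 / (θ - a * t)) * ((a ^ 2 - a) / 2) =
      t + (a ^ 2 + a) * t ^ 2 / (2 * (θ - a * t)) := by
  set d := θ - a * t
  have hd : d ≠ 0 := sub_ne_zero.2 hθ
  rw [show θ = d + a * t by ring]
  field_simp
  ring

/-- In Case 2, for t > 0 and a > 1, the average AoI
Ā(θ) = tθ/(θ − at) + (t²/(θ − at))·(a² − a)/2 equals
t + (a² + a)t²/(2(θ − at)) for θ > at, and Ā is strictly convex and strictly
decreasing on (at, ∞). -/
theorem case2_aoi_identity_convex_decreasing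
    (t a : ℝ) (ht : 0 < t) (ha : 1 < a) :
    (∀ θ : ℝ, a * t < θ →
      t * θ / (θ - a * t) + (t ^ 2 / (θ - a * t)) * ((a ^ 2 - a) / 2) =
        t + (a ^ 2 + a) * t ^ 2 / (2 * (θ - a * t))) ∧
    StrictConvexOn ℝ (Set.Ioi (a * t))
      (fun θ : ℝ =>
        t * θ / (θ - a * t) + (t ^ 2 / (θ - a * t)) * ((a ^ 2 - a) / 2)) ∧
    StrictAntiOn
      (fun θ : ℝ =>
        t * θ / (θ - a * t) + (t ^ 2 / (θ - a * t)) * ((a ^ 2 - a) / 2))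
      (Set.Ioi (a * t)) := by
  have ha₀ : 0 < a := one_pos.trans ha
  have hc : 0 < (a ^ 2 + a) * t ^ 2 / 2 := by positivity
  have hA : EqOn (fun θ => t + (a ^ 2 + a) * t ^ 2 / 2 / (θ - a * t))
      (fun θ => t * θ / (θ - a * t) + (t ^ 2 / (θ - a * t)) * ((a ^ 2 - a) / 2))
      (Ioi (a * t)) := fun θ hθ => by
    dsimp only
    rw [case2_aoi_eq_add_div t a θ hθ.ne', div_div]
  exact ⟨fun θ hθ => case2_aoi_eq_add_div t a θ hθ.ne',
    (strictConvexOn_const_add_div_sub t (a * t) hc).congr hA,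
    (strictAntiOn_const_add_div_sub t (a * t) hc).congr hA⟩
end
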